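/- arXiv:1607.03399 — 2 statements merged into one kernel-verified Lean document; each statement's English description precedes it below -/
import Mathlib

section
/- For a vertically mapped wedge, the Jacobian determinant J of the geometric mapping Φ is independent of the extruded reference coordinate t. -/
noncomputable section

/-- Vertex basis functions of the reference wedge. -/
def wv : Fin 6 → ℝ → ℝ → ℝ → ℝ
  | 0 => fun r s t => (1 - r - s) * (1 - t)
  | 1 => fun r s t => r * (1 - t)
  | 2 => fun r s t => s * (1 - t)
  | 3 => fun r s t => (1 - r - s) * t
  | 4 => fun r s t => r * t
  | 5 => fun r s t => s * t

/-- The `i`-th coordinate of the trilinear vertex mapping `Φ` with vertices `ν`. -/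
def wedgeMap (ν : Fin 6 → Fin 3 → ℝ) (i : Fin 3) (r s t : ℝ) : ℝ :=
  ∑ k : Fin 6, ν k i * wv k r s t

/-- A wedge is vertically mapped if the x and y coordinates agree within each
vertex pair (ν₁,ν₄), (ν₂,ν₅), (ν₃,ν₆). -/
def VerticallyMapped (ν : Fin 6 → Fin 3 → ℝ) : Prop :=
  (ν 0 0 = ν 3 0 ∧ ν 0 1 = ν 3 1) ∧
  (ν 1 0 = ν 4 0 ∧ ν 1 1 = ν 4 1) ∧
  (ν 2 0 = ν 5 0 ∧ ν 2 1 = ν 5 1)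

/-- partial derivative in the first (r) variable -/
def pdr (f : ℝ → ℝ → ℝ → ℝ) (r s t : ℝ) : ℝ := deriv (fun x => f x s t) r
/-- partial derivative in the second (s) variable -/
def pds (f : ℝ → ℝ → ℝ → ℝ) (r s t : ℝ) : ℝ := deriv (fun x => f r x t) s
/-- partial derivative in the third (t) variable -/
def pdt (f : ℝ → ℝ → ℝ → ℝ) (r s t : ℝ) : ℝ := deriv (fun x => f r s x) t

/-- Jacobian determinant of the wedge mapping. -/
def wedgeJac (ν : Fin 6 → Fin 3 → ℝ) (r s t : ℝ) : ℝ :=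
  Matrix.det !![pdr (wedgeMap ν 0) r s t, pds (wedgeMap ν 0) r s t, pdt (wedgeMap ν 0) r s t;
                pdr (wedgeMap ν 1) r s t, pds (wedgeMap ν 1) r s t, pdt (wedgeMap ν 1) r s t;
                pdr (wedgeMap ν 2) r s t, pds (wedgeMap ν 2) r s t, pdt (wedgeMap ν 2) r s t]

set_option maxHeartbeats 2000000 in
/-- For a vertically mapped wedge, the Jacobian determinant is independent
of the extruded coordinate t. -/
theorem stmt1 (ν : Fin 6 → Fin 3 → ℝ) (hν : VerticallyMapped ν) :
    ∀ r s t t' : ℝ, wedgeJac ν r s t = wedgeJac ν r s t' := by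

  intro r s t t'
  obtain ⟨⟨h10, h11⟩, ⟨h20, h21⟩, ⟨h30, h31⟩⟩ := hν
  have keyr : ∀ (c : Fin 6 → ℝ) (s t r : ℝ),
      deriv (fun x => c 0 * ((1 - x - s) * (1 - t)) + c 1 * (x * (1 - t)) +
        c 2 * (s * (1 - t)) + c 3 * ((1 - x - s) * t) + c 4 * (x * t) + c 5 * (s * t)) r
      = (c 1 - c 0) * (1 - t) + (c 4 - c 3) * t := by
    intro c s t r
    have h : (fun x : ℝ => c 0 * ((1 - x - s) * (1 - t)) + c 1 * (x * (1 - t)) +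
        c 2 * (s * (1 - t)) + c 3 * ((1 - x - s) * t) + c 4 * (x * t) + c 5 * (s * t))
        = fun x : ℝ => ((c 1 - c 0) * (1 - t) + (c 4 - c 3) * t) * x +
          (c 0 * (1 - s) * (1 - t) + c 2 * (s * (1 - t)) + c 3 * ((1 - s) * t) + c 5 * (s * t)) := by
      funext x; ring
    rw [h, deriv_add_const]
    simpa using ((hasDerivAt_id r).const_mul ((c 1 - c 0) * (1 - t) + (c 4 - c 3) * t)).deriv
  have keys : ∀ (c : Fin 6 → ℝ) (r t s : ℝ),
      deriv (fun x => c 0 * ((1 - r - x) * (1 - t)) + c 1 * (r * (1 - t)) +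
        c 2 * (x * (1 - t)) + c 3 * ((1 - r - x) * t) + c 4 * (r * t) + c 5 * (x * t)) s
      = (c 2 - c 0) * (1 - t) + (c 5 - c 3) * t := by
    intro c r t s
    have h : (fun x : ℝ => c 0 * ((1 - r - x) * (1 - t)) + c 1 * (r * (1 - t)) +
        c 2 * (x * (1 - t)) + c 3 * ((1 - r - x) * t) + c 4 * (r * t) + c 5 * (x * t))
        = fun x : ℝ => ((c 2 - c 0) * (1 - t) + (c 5 - c 3) * t) * x +
          (c 0 * (1 - r) * (1 - t) + c 1 * (r * (1 - t)) + c 3 * ((1 - r) * t) + c 4 * (r * t)) := by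
      funext x; ring
    rw [h, deriv_add_const]
    simpa using ((hasDerivAt_id s).const_mul ((c 2 - c 0) * (1 - t) + (c 5 - c 3) * t)).deriv
  have keyt : ∀ (c : Fin 6 → ℝ) (r s t : ℝ),
      deriv (fun x => c 0 * ((1 - r - s) * (1 - x)) + c 1 * (r * (1 - x)) +
        c 2 * (s * (1 - x)) + c 3 * ((1 - r - s) * x) + c 4 * (r * x) + c 5 * (s * x)) t
      = (c 3 - c 0) * (1 - r - s) + (c 4 - c 1) * r + (c 5 - c 2) * s := by
    intro c r s t
    have h : (fun x : ℝ => c 0 * ((1 - r - s) * (1 - x)) + c 1 * (r * (1 - x)) +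
        c 2 * (s * (1 - x)) + c 3 * ((1 - r - s) * x) + c 4 * (r * x) + c 5 * (s * x))
        = fun x : ℝ => ((c 3 - c 0) * (1 - r - s) + (c 4 - c 1) * r + (c 5 - c 2) * s) * x +
          (c 0 * (1 - r - s) + c 1 * r + c 2 * s) := by
      funext x; ring
    rw [h, deriv_add_const]
    simpa using ((hasDerivAt_id t).const_mul
      ((c 3 - c 0) * (1 - r - s) + (c 4 - c 1) * r + (c 5 - c 2) * s)).deriv
  simp only [wedgeJac, wedgeMap, wv, Fin.sum_univ_six, pdr, pds, pdt,
    keyr (fun k => ν k 0), keyr (fun k => ν k 1), keyr (fun k => ν k 2),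
    keys (fun k => ν k 0), keys (fun k => ν k 1), keys (fun k => ν k 2),
    keyt (fun k => ν k 0), keyt (fun k => ν k 1), keyt (fun k => ν k 2),
    Matrix.cons_val', Matrix.cons_val_zero, Matrix.cons_val_one,
    Matrix.head_cons, Matrix.empty_val', Matrix.cons_val_fin_one, Matrix.head_fin_const]
  rw [h10, h11, h20, h21, h30, h31]
  simp [Matrix.det_fin_three]
  ring
end
end

section
/- For a vertically mapped wedge with J > 0, the geometric factors r_x, r_y, s_x, s_y and the product t_z·J are constant functions of the reference coordinates (r,s,t). -/
noncomputable section

/-- x component shorthand -/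
def X (ν : Fin 6 → Fin 3 → ℝ) : ℝ → ℝ → ℝ → ℝ := wedgeMap ν 0
def Y (ν : Fin 6 → Fin 3 → ℝ) : ℝ → ℝ → ℝ → ℝ := wedgeMap ν 1
def Z (ν : Fin 6 → Fin 3 → ℝ) : ℝ → ℝ → ℝ → ℝ := wedgeMap ν 2

def gRx (ν : Fin 6 → Fin 3 → ℝ) (r s t : ℝ) : ℝ :=
  (pds (Y ν) r s t * pdt (Z ν) r s t - pds (Z ν) r s t * pdt (Y ν) r s t) / wedgeJac ν r s t
def gRy (ν : Fin 6 → Fin 3 → ℝ) (r s t : ℝ) : ℝ :=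
  -(pds (X ν) r s t * pdt (Z ν) r s t - pds (Z ν) r s t * pdt (X ν) r s t) / wedgeJac ν r s t
def gSx (ν : Fin 6 → Fin 3 → ℝ) (r s t : ℝ) : ℝ :=
  -(pdr (Y ν) r s t * pdt (Z ν) r s t - pdr (Z ν) r s t * pdt (Y ν) r s t) / wedgeJac ν r s t
def gSy (ν : Fin 6 → Fin 3 → ℝ) (r s t : ℝ) : ℝ :=
  (pdr (X ν) r s t * pdt (Z ν) r s t - pdr (Z ν) r s t * pdt (X ν) r s t) / wedgeJac ν r s t
/-- t_z · J  (note t_z = (x_r y_s − y_r x_s)/J, so t_z·J = x_r y_s − y_r x_s). -/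
def gTzJ (ν : Fin 6 → Fin 3 → ℝ) (r s t : ℝ) : ℝ :=
  pdr (X ν) r s t * pds (Y ν) r s t - pdr (Y ν) r s t * pds (X ν) r s t

/-! The wedge map is affine in each reference coordinate separately. A vertical mapping makes `x`
and `y` independent of `t` and affine in `(r, s)`: `x_t = y_t = 0`, and `x_r, x_s, y_r, y_s` are
the constant entries of the Jacobian of the horizontal projection of the base triangle, whose
determinant is `D = baseJac ν`. Expanding `J` along its last column gives `J = D z_t`, so
each of `r_x, r_y, s_x, s_y` is a constant `2 × 2` cofactor times `z_t` divided by `D z_t`, while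
`t_z J = D`. -/

lemma deriv_affine (a b x : ℝ) : deriv (fun y => a * y + b) x = a := by
  rw [deriv_add_const, deriv_const_mul_id]

section

variable (ν : Fin 6 → Fin 3 → ℝ) (i : Fin 3) (r s t : ℝ)

lemma pdr_wedgeMap :
    pdr (wedgeMap ν i) r s t = (ν 1 i - ν 0 i) * (1 - t) + (ν 4 i - ν 3 i) * t := by
  have h : (fun x => wedgeMap ν i x s t)
      = fun x => ((ν 1 i - ν 0 i) * (1 - t) + (ν 4 i - ν 3 i) * t) * x
        + (ν 0 i * ((1 - s) * (1 - t)) + ν 2 i * (s * (1 - t))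
          + ν 3 i * ((1 - s) * t) + ν 5 i * (s * t)) := by
    funext x
    simp only [wedgeMap, wv, Fin.sum_univ_six]
    ring
  rw [pdr, h, deriv_affine]

lemma pds_wedgeMap :
    pds (wedgeMap ν i) r s t = (ν 2 i - ν 0 i) * (1 - t) + (ν 5 i - ν 3 i) * t := by
  have h : (fun x => wedgeMap ν i r x t)
      = fun x => ((ν 2 i - ν 0 i) * (1 - t) + (ν 5 i - ν 3 i) * t) * x
        + (ν 0 i * ((1 - r) * (1 - t)) + ν 1 i * (r * (1 - t))
          + ν 3 i * ((1 - r) * t) + ν 4 i * (r * t)) := by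
    funext x
    simp only [wedgeMap, wv, Fin.sum_univ_six]
    ring
  rw [pds, h, deriv_affine]

lemma pdt_wedgeMap :
    pdt (wedgeMap ν i) r s t
      = (ν 3 i - ν 0 i) * (1 - r - s) + (ν 4 i - ν 1 i) * r + (ν 5 i - ν 2 i) * s := by
  have h : (fun x => wedgeMap ν i r s x)
      = fun x =>
        ((ν 3 i - ν 0 i) * (1 - r - s) + (ν 4 i - ν 1 i) * r + (ν 5 i - ν 2 i) * s) * x
        + (ν 0 i * (1 - r - s) + ν 1 i * r + ν 2 i * s) := by
    funext x
    simp only [wedgeMap, wv, Fin.sum_univ_six]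
    ring
  rw [pdt, h, deriv_affine]

variable {ν i}

lemma pdr_wedgeMap_of_vertical (h₀ : ν 3 i = ν 0 i) (h₁ : ν 4 i = ν 1 i) :
    pdr (wedgeMap ν i) r s t = ν 1 i - ν 0 i := by
  rw [pdr_wedgeMap, h₀, h₁]
  ring

lemma pds_wedgeMap_of_vertical (h₀ : ν 3 i = ν 0 i) (h₂ : ν 5 i = ν 2 i) :
    pds (wedgeMap ν i) r s t = ν 2 i - ν 0 i := by
  rw [pds_wedgeMap, h₀, h₂]
  ring

lemma pdt_wedgeMap_of_vertical (h₀ : ν 3 i = ν 0 i) (h₁ : ν 4 i = ν 1 i)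
    (h₂ : ν 5 i = ν 2 i) : pdt (wedgeMap ν i) r s t = 0 := by
  rw [pdt_wedgeMap, h₀, h₁, h₂]
  ring

end

def baseJac (ν : Fin 6 → Fin 3 → ℝ) : ℝ :=
  (ν 1 0 - ν 0 0) * (ν 2 1 - ν 0 1) - (ν 1 1 - ν 0 1) * (ν 2 0 - ν 0 0)

namespace VerticallyMapped

variable {ν : Fin 6 → Fin 3 → ℝ} (r s t : ℝ)

lemma pdr_X (hν : VerticallyMapped ν) : pdr (X ν) r s t = ν 1 0 - ν 0 0 :=
  pdr_wedgeMap_of_vertical r s t hν.1.1.symm hν.2.1.1.symm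

lemma pds_X (hν : VerticallyMapped ν) : pds (X ν) r s t = ν 2 0 - ν 0 0 :=
  pds_wedgeMap_of_vertical r s t hν.1.1.symm hν.2.2.1.symm

lemma pdt_X (hν : VerticallyMapped ν) : pdt (X ν) r s t = 0 :=
  pdt_wedgeMap_of_vertical r s t hν.1.1.symm hν.2.1.1.symm hν.2.2.1.symm

lemma pdr_Y (hν : VerticallyMapped ν) : pdr (Y ν) r s t = ν 1 1 - ν 0 1 :=
  pdr_wedgeMap_of_vertical r s t hν.1.2.symm hν.2.1.2.symm

lemma pds_Y (hν : VerticallyMapped ν) : pds (Y ν) r s t = ν 2 1 - ν 0 1 :=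
  pds_wedgeMap_of_vertical r s t hν.1.2.symm hν.2.2.2.symm

lemma pdt_Y (hν : VerticallyMapped ν) : pdt (Y ν) r s t = 0 :=
  pdt_wedgeMap_of_vertical r s t hν.1.2.symm hν.2.1.2.symm hν.2.2.2.symm

lemma wedgeJac_eq (hν : VerticallyMapped ν) :
    wedgeJac ν r s t = baseJac ν * pdt (Z ν) r s t := by
  have hX : wedgeMap ν 0 = X ν := rfl
  have hY : wedgeMap ν 1 = Y ν := rfl
  have hZ : wedgeMap ν 2 = Z ν := rfl
  rw [wedgeJac, Matrix.det_fin_three]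
  simp only [Matrix.of_apply, Matrix.cons_val', Matrix.cons_val_zero, Matrix.cons_val_one,
    Matrix.cons_val_two, Matrix.empty_val', Matrix.cons_val_fin_one, Matrix.tail_cons,
    Matrix.vecHead, hX, hY, hZ, hν.pdr_X, hν.pds_X, hν.pdt_X, hν.pdr_Y, hν.pds_Y,
    hν.pdt_Y]
  rw [baseJac]
  ring

lemma gTzJ_eq (hν : VerticallyMapped ν) : gTzJ ν r s t = baseJac ν := by
  rw [gTzJ, hν.pdr_X, hν.pds_X, hν.pdr_Y, hν.pds_Y, baseJac]

variable {r s t}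

lemma pdt_Z_ne_zero (hν : VerticallyMapped ν) (hJ : wedgeJac ν r s t ≠ 0) :
    pdt (Z ν) r s t ≠ 0 :=
  right_ne_zero_of_mul (hν.wedgeJac_eq r s t ▸ hJ)

lemma gRx_eq (hν : VerticallyMapped ν) (hJ : wedgeJac ν r s t ≠ 0) :
    gRx ν r s t = (ν 2 1 - ν 0 1) / baseJac ν := by
  rw [gRx, hν.wedgeJac_eq, hν.pds_Y, hν.pdt_Y, mul_zero, sub_zero,
    mul_div_mul_right _ _ (hν.pdt_Z_ne_zero hJ)]

lemma gRy_eq (hν : VerticallyMapped ν) (hJ : wedgeJac ν r s t ≠ 0) :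
    gRy ν r s t = -(ν 2 0 - ν 0 0) / baseJac ν := by
  rw [gRy, hν.wedgeJac_eq, hν.pds_X, hν.pdt_X, mul_zero, sub_zero, ← neg_mul,
    mul_div_mul_right _ _ (hν.pdt_Z_ne_zero hJ)]

lemma gSx_eq (hν : VerticallyMapped ν) (hJ : wedgeJac ν r s t ≠ 0) :
    gSx ν r s t = -(ν 1 1 - ν 0 1) / baseJac ν := by
  rw [gSx, hν.wedgeJac_eq, hν.pdr_Y, hν.pdt_Y, mul_zero, sub_zero, ← neg_mul,
    mul_div_mul_right _ _ (hν.pdt_Z_ne_zero hJ)]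

lemma gSy_eq (hν : VerticallyMapped ν) (hJ : wedgeJac ν r s t ≠ 0) :
    gSy ν r s t = (ν 1 0 - ν 0 0) / baseJac ν := by
  rw [gSy, hν.wedgeJac_eq, hν.pdr_X, hν.pdt_X, mul_zero, sub_zero,
    mul_div_mul_right _ _ (hν.pdt_Z_ne_zero hJ)]

end VerticallyMapped

/-- For a vertically mapped wedge with J > 0, the geometric factors
r_x, r_y, s_x, s_y and the product t_z·J are constant functions of (r,s,t). -/
theorem stmt4 (ν : Fin 6 → Fin 3 → ℝ) (hν : VerticallyMapped ν)
    (hJ : ∀ r s t : ℝ, 0 < wedgeJac ν r s t) :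
    ∀ r s t r' s' t' : ℝ,
      gRx ν r s t = gRx ν r' s' t' ∧ gRy ν r s t = gRy ν r' s' t' ∧
      gSx ν r s t = gSx ν r' s' t' ∧ gSy ν r s t = gSy ν r' s' t' ∧
      gTzJ ν r s t = gTzJ ν r' s' t' := by
  intro r s t r' s' t'
  have hJ₁ := (hJ r s t).ne'
  have hJ₂ := (hJ r' s' t').ne'
  refine ⟨?_, ?_, ?_, ?_, ?_⟩
  · rw [hν.gRx_eq hJ₁, hν.gRx_eq hJ₂]
  · rw [hν.gRy_eq hJ₁, hν.gRy_eq hJ₂]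
  · rw [hν.gSx_eq hJ₁, hν.gSx_eq hJ₂]
  · rw [hν.gSy_eq hJ₁, hν.gSy_eq hJ₂]
  · rw [hν.gTzJ_eq, hν.gTzJ_eq]
end
end
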